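/- Let Q be a faithful quandle. If LMlt(Q) has two nontrivial normal subgroups N and M with N ∩ M = 1, then Q is subdirectly reducible: there exist two congruences of Q, each different from the equality relation, whose intersection is the equality relation. -/

import Mathlib

/-- A quandle structure on `Q`, given by its left translations: each `L x` is a
permutation of `Q`, `x * x = x`, and `x * (y * z) = (x * y) * (x * z)`
(writing `x * y` for `L x y`). -/
structure QuandleStr (Q : Type*) where
  L : Q → Equiv.Perm Q
  idem : ∀ x : Q, L x x = x
  selfDistrib : ∀ x y z : Q, L x (L y z) = L (L x y) (L x z)

namespace QuandleStr

variable {Q : Type*} (S : QuandleStr Q)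

/-- The left multiplication group `LMlt(Q)`, generated by all left translations. -/
def Lmlt : Subgroup (Equiv.Perm Q) :=
  Subgroup.closure (Set.range S.L)

/-- The displacement group `Dis(Q)`, generated by all `L x * (L y)⁻¹`. -/
def Dis : Subgroup (Equiv.Perm Q) :=
  Subgroup.closure {g : Equiv.Perm Q | ∃ x y : Q, g = S.L x * (S.L y)⁻¹}

/-- A congruence of the quandle: an equivalence relation compatible with `*` and `\`. -/
def IsCong (θ : Setoid Q) : Prop :=
  ∀ x y u v : Q, θ.r x y → θ.r u v →
    θ.r (S.L x u) (S.L y v) ∧ θ.r ((S.L x)⁻¹ u) ((S.L y)⁻¹ v)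

/-- A quandle is faithful if `x ↦ L x` is injective. -/
def Faithful : Prop := Function.Injective S.L

/-- A quandle is connected if `LMlt(Q)` acts transitively. -/
def Connected : Prop := ∀ x y : Q, ∃ g ∈ S.Lmlt, g x = y

/-- A quandle is latin if all right translations are bijective. -/
def Latin : Prop := ∀ y : Q, Function.Bijective fun x : Q => S.L x y

/-- `θ` is a minimal congruence: not equality, and the only congruence strictly
contained in it is equality. -/
def IsMinCong (θ : Setoid Q) : Prop :=
  S.IsCong θ ∧ θ ≠ ⊥ ∧ ∀ β : Setoid Q, S.IsCong β → β < θ → β = ⊥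

/-- `θ` is a maximal congruence: not the all relation, and the only congruence strictly
containing it is the all relation. -/
def IsMaxCong (θ : Setoid Q) : Prop :=
  S.IsCong θ ∧ θ ≠ ⊤ ∧ ∀ β : Setoid Q, S.IsCong β → θ < β → β = ⊤

/-- `Dis_α`: the subgroup generated by the `L x * (L y)⁻¹` with `x α y`. -/
def DisC (r : Q → Q → Prop) : Subgroup (Equiv.Perm Q) :=
  Subgroup.closure {g : Equiv.Perm Q | ∃ x y : Q, r x y ∧ g = S.L x * (S.L y)⁻¹}

/-- `Dis^α`: the elements of `Dis(Q)` displacing every point inside its `α`-class. -/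
def DisUp (θ : Setoid Q) : Subgroup (Equiv.Perm Q) where
  carrier := {g : Equiv.Perm Q | g ∈ S.Dis ∧ ∀ x : Q, θ.r (g x) x}
  one_mem' := ⟨S.Dis.one_mem, fun x => θ.iseqv.refl x⟩
  mul_mem' := by
    rintro a b ⟨ha, ha2⟩ ⟨hb, hb2⟩
    refine ⟨S.Dis.mul_mem ha hb, fun x => ?_⟩
    rw [Equiv.Perm.mul_apply]
    exact θ.iseqv.trans (ha2 (b x)) (hb2 x)
  inv_mem' := by
    rintro a ⟨ha, ha2⟩
    refine ⟨S.Dis.inv_mem ha, fun x => ?_⟩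
    have h := ha2 (a⁻¹ x)
    rw [show a (a⁻¹ x) = x from a.apply_symm_apply x] at h
    exact θ.iseqv.symm h

end QuandleStr

/-- The orbit equivalence relation of a subgroup of permutations. -/
def orbSetoid {Q : Type*} (N : Subgroup (Equiv.Perm Q)) : Setoid Q where
  r x y := ∃ n ∈ N, n x = y
  iseqv := by
    refine ⟨fun x => ⟨1, N.one_mem, rfl⟩, ?_, ?_⟩
    · rintro x y ⟨n, hn, rfl⟩
      exact ⟨n⁻¹, N.inv_mem hn, n.symm_apply_apply x⟩
    · rintro x y z ⟨n, hn, rfl⟩ ⟨m, hm, rfl⟩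
      exact ⟨m * n, N.mul_mem hm hn, Equiv.Perm.mul_apply m n x⟩

/-!
Every element `g` of `LMlt(Q)` is an automorphism of `Q`, so `g L_x g⁻¹ = L_{g x}`. Hence the
orbits of a subgroup `N ≤ LMlt(Q)` normalised by `LMlt(Q)` form a congruence, which is not the
equality relation when `N ≠ 1`. If `y = n x = m x` with `n ∈ N`, `m ∈ M`, then
`L_y L_x⁻¹ = [n, L_x] = [m, L_x]` lies in `N ∩ M = 1`, so `L_y = L_x` and faithfulness gives
`y = x`: the orbit congruences of `N` and `M` meet in the equality relation.
-/

open scoped commutatorElement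

theorem commutatorElement_mem_of_normalizes {G : Type*} [Group G] {H N : Subgroup G}
    (hN : ∀ g ∈ H, ∀ n ∈ N, g * n * g⁻¹ ∈ N) {g n : G} (hg : g ∈ H) (hn : n ∈ N) :
    ⁅n, g⁆ ∈ N := by
  rw [commutatorElement_def, mul_assoc n, mul_assoc n]
  exact N.mul_mem hn (by simpa only [mul_assoc] using hN g hg _ (N.inv_mem hn))

theorem orbSetoid_eq_bot_iff {Q : Type*} {N : Subgroup (Equiv.Perm Q)} :
    orbSetoid N = ⊥ ↔ N = ⊥ := by
  constructor
  · intro h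
    refine (Subgroup.eq_bot_iff_forall N).mpr fun n hn => Equiv.ext fun x => ?_
    have hx : (orbSetoid N).r x (n x) := ⟨n, hn, rfl⟩
    rw [h] at hx
    exact hx.symm
  · rintro rfl
    ext x y
    rw [Setoid.bot_def]
    refine ⟨fun ⟨n, hn, hxy⟩ => ?_, fun hxy => hxy ▸ (orbSetoid ⊥).refl x⟩
    rw [Subgroup.mem_bot] at hn
    rwa [hn] at hxy

namespace QuandleStr

variable {Q : Type*} (S : QuandleStr Q)

def Aut : Subgroup (Equiv.Perm Q) where
  carrier := {g | ∀ x y, g (S.L x y) = S.L (g x) (g y)}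
  one_mem' _ _ := rfl
  mul_mem' {a b} ha hb x y := by
    rw [Equiv.Perm.mul_apply, hb x y, ha]; rfl
  inv_mem' {a} ha x y := by
    apply a.injective
    simp only [ha _ _, Equiv.Perm.coe_inv, Equiv.apply_symm_apply]

theorem mem_Aut {g : Equiv.Perm Q} : g ∈ S.Aut ↔ ∀ x y, g (S.L x y) = S.L (g x) (g y) :=
  Iff.rfl

theorem L_mem_Lmlt (x : Q) : S.L x ∈ S.Lmlt :=
  Subgroup.subset_closure ⟨x, rfl⟩

theorem Lmlt_le_Aut : S.Lmlt ≤ S.Aut :=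
  (Subgroup.closure_le _).mpr <| by
    rintro _ ⟨z, rfl⟩ x y
    exact S.selfDistrib z x y

variable {S}

theorem mul_L_mul_inv {g : Equiv.Perm Q} (hg : g ∈ S.Aut) (x : Q) :
    g * S.L x * g⁻¹ = S.L (g x) := by
  ext y
  simp only [Equiv.Perm.mul_apply, S.mem_Aut.mp hg, Equiv.Perm.coe_inv,
    Equiv.apply_symm_apply]

theorem commutatorElement_L {g : Equiv.Perm Q} (hg : g ∈ S.Aut) (x : Q) :
    ⁅g, S.L x⁆ = S.L (g x) * (S.L x)⁻¹ := by
  rw [commutatorElement_def, mul_L_mul_inv hg]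

variable {N : Subgroup (Equiv.Perm Q)}

theorem orbSetoid_rel_apply {g : Equiv.Perm Q}
    (hNnorm : ∀ g ∈ S.Lmlt, ∀ n ∈ N, g * n * g⁻¹ ∈ N) (hg : g ∈ S.Lmlt) {x y : Q}
    (h : (orbSetoid N).r x y) : (orbSetoid N).r (g x) (g y) := by
  obtain ⟨n, hn, rfl⟩ := h
  exact ⟨g * n * g⁻¹, hNnorm g hg n hn, by simp only [Equiv.Perm.mul_apply,
    Equiv.Perm.coe_inv, Equiv.symm_apply_apply]⟩

theorem orbSetoid_rel_conj_apply {g n : Equiv.Perm Q}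
    (hNnorm : ∀ g ∈ S.Lmlt, ∀ n ∈ N, g * n * g⁻¹ ∈ N) (hg : g ∈ S.Lmlt) (hn : n ∈ N)
    (w : Q) : (orbSetoid N).r (g w) ((n * g * n⁻¹) w) :=
  ⟨⁅n, g⁆, commutatorElement_mem_of_normalizes hNnorm hg hn, by
    simp only [commutatorElement_def, Equiv.Perm.mul_apply, Equiv.Perm.coe_inv,
      Equiv.symm_apply_apply]⟩

theorem isCong_orbSetoid (hNle : N ≤ S.Aut)
    (hNnorm : ∀ g ∈ S.Lmlt, ∀ n ∈ N, g * n * g⁻¹ ∈ N) :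
    S.IsCong (orbSetoid N) := by
  rintro x _ u v ⟨n, hn, rfl⟩ huv
  have hL : S.L (n x) = n * S.L x * n⁻¹ := (mul_L_mul_inv (hNle hn) x).symm
  have hLinv : (S.L (n x))⁻¹ = n * (S.L x)⁻¹ * n⁻¹ := by rw [hL]; group
  constructor
  · rw [hL]
    exact (orbSetoid N).trans (orbSetoid_rel_apply hNnorm (S.L_mem_Lmlt x) huv)
      (orbSetoid_rel_conj_apply hNnorm (S.L_mem_Lmlt x) hn v)
  · rw [hLinv]
    have hLx : (S.L x)⁻¹ ∈ S.Lmlt := S.Lmlt.inv_mem (S.L_mem_Lmlt x)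
    exact (orbSetoid N).trans (orbSetoid_rel_apply hNnorm hLx huv)
      (orbSetoid_rel_conj_apply hNnorm hLx hn v)

theorem orbSetoid_inf_orbSetoid_eq_bot (hfaith : S.Faithful) {M : Subgroup (Equiv.Perm Q)}
    (hNle : N ≤ S.Aut) (hMle : M ≤ S.Aut)
    (hNnorm : ∀ g ∈ S.Lmlt, ∀ n ∈ N, g * n * g⁻¹ ∈ N)
    (hMnorm : ∀ g ∈ S.Lmlt, ∀ n ∈ M, g * n * g⁻¹ ∈ M) (hNM : N ⊓ M = ⊥) :
    orbSetoid N ⊓ orbSetoid M = ⊥ := by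
  ext x y
  refine ⟨fun ⟨⟨n, hn, hnx⟩, ⟨m, hm, hmx⟩⟩ => ?_, fun h => ?_⟩
  · have hN := commutatorElement_mem_of_normalizes hNnorm (S.L_mem_Lmlt x) hn
    have hM := commutatorElement_mem_of_normalizes hMnorm (S.L_mem_Lmlt x) hm
    rw [commutatorElement_L (hNle hn), hnx] at hN
    rw [commutatorElement_L (hMle hm), hmx] at hM
    have h1 : S.L y * (S.L x)⁻¹ ∈ N ⊓ M := ⟨hN, hM⟩
    rw [hNM, Subgroup.mem_bot, mul_inv_eq_one] at h1
    exact (hfaith h1).symm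
  · rw [Setoid.bot_def] at h
    subst h
    exact ⟨(orbSetoid N).refl x, (orbSetoid M).refl x⟩

end QuandleStr

theorem stmt6 {Q : Type*} (S : QuandleStr Q) (hfaith : S.Faithful)
    (N M : Subgroup (Equiv.Perm Q)) (hNle : N ≤ S.Lmlt) (hMle : M ≤ S.Lmlt)
    (hNnorm : ∀ g ∈ S.Lmlt, ∀ n ∈ N, g * n * g⁻¹ ∈ N)
    (hMnorm : ∀ g ∈ S.Lmlt, ∀ n ∈ M, g * n * g⁻¹ ∈ M)
    (hNbot : N ≠ ⊥) (hMbot : M ≠ ⊥) (hNM : N ⊓ M = ⊥) :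
    ∃ θ₁ θ₂ : Setoid Q, S.IsCong θ₁ ∧ S.IsCong θ₂ ∧ θ₁ ≠ ⊥ ∧ θ₂ ≠ ⊥ ∧ θ₁ ⊓ θ₂ = ⊥ := by
  have hNaut := hNle.trans S.Lmlt_le_Aut
  have hMaut := hMle.trans S.Lmlt_le_Aut
  exact ⟨orbSetoid N, orbSetoid M, QuandleStr.isCong_orbSetoid hNaut hNnorm,
    QuandleStr.isCong_orbSetoid hMaut hMnorm, orbSetoid_eq_bot_iff.not.mpr hNbot,
    orbSetoid_eq_bot_iff.not.mpr hMbot,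
    QuandleStr.orbSetoid_inf_orbSetoid_eq_bot hfaith hNaut hMaut hNnorm hMnorm hNM⟩
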